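/- For every g ∈ ℋ, the ℋ-valued Bochner integral 𝔼[g(T) K_T] exists and satisfies 𝔼[g(T) K_T] + W_λ g = g; equivalently, the linear operator g ↦ 𝔼[g(T) K_T] + W_λ g is the identity operator on ℋ. -/

import Mathlib

/-!
Every `g` expands in the system `hvec`, which is orthogonal in `ℋ` with `‖h_v‖² = 1 + λγ_v`;
hence `‖K_t‖² = ∑_v h_v(t)² / (1 + λγ_v) ≤ C_h² / (λ c₀) ∑_v (v + 1)^{-2m}`, so the kernel is
uniformly bounded (this is where `2m > 1` enters) and `ℋ` is separable. Thus `g(T) K_T` is a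
bounded measurable `ℋ`-valued variable and is integrable. Testing against `f ∈ ℋ`,
`⟪f, 𝔼[g(T) K_T]⟫ = 𝔼[f(T) g(T)] = V(f, g)` and `⟪f, W_λ g⟫ = λ J(f, g)`, which add up to `⟪f, g⟫`.
-/

open scoped RealInnerProductSpace
open MeasureTheory

noncomputable section

/-- The RKHS framework of the paper: a real Hilbert space `H` of functions on `[0,1]`
(with evaluation map `ev`), whose inner product is `⟪f, g⟫ = V f g + lam * J f g` for
symmetric positive-semidefinite bilinear forms `V` and `J`, together with a simultaneously
orthogonal system `hvec` with eigenvalues `γ`, uniformly bounded by `Ch`, in which every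
element expands, a reproducing kernel `K`, and the operator `W = W_lam` determined by
`⟪W f, g⟫ = lam * J f g`. -/
structure RKHSContext (lam : ℝ) (H : Type*) [NormedAddCommGroup H] [InnerProductSpace ℝ H] where
  ev : H → ℝ → ℝ
  V : H →ₗ[ℝ] H →ₗ[ℝ] ℝ
  J : H →ₗ[ℝ] H →ₗ[ℝ] ℝ
  V_symm : ∀ f g : H, V f g = V g f
  J_symm : ∀ f g : H, J f g = J g f
  V_nonneg : ∀ f : H, 0 ≤ V f f
  J_nonneg : ∀ f : H, 0 ≤ J f f
  inner_eq : ∀ f g : H, ⟪f, g⟫ = V f g + lam * J f g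
  hvec : ℕ → H
  γ : ℕ → ℝ
  γ_pos : ∀ v, 0 < γ v
  Ch : ℝ
  hvec_bound : ∀ v : ℕ, ∀ t ∈ Set.Icc (0:ℝ) 1, |ev (hvec v) t| ≤ Ch
  V_orth : ∀ u v : ℕ, V (hvec u) (hvec v) = if u = v then 1 else 0
  J_orth : ∀ u v : ℕ, J (hvec u) (hvec v) = if u = v then γ u else 0
  expansion : ∀ g : H, HasSum (fun v => V g (hvec v) • hvec v) g
  K : ℝ → H
  reproducing : ∀ t ∈ Set.Icc (0:ℝ) 1, ∀ f : H, ⟪K t, f⟫ = ev f t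
  W : H →ₗ[ℝ] H
  W_spec : ∀ f g : H, ⟪W f, g⟫ = lam * J f g

open TopologicalSpace

theorem summable_nat_add_one_rpow_inv {p : ℝ} (hp : 1 < p) :
    Summable fun n : ℕ => (((n : ℝ) + 1) ^ p)⁻¹ := by
  simpa only [Nat.cast_add, Nat.cast_one] using
    (summable_nat_add_iff (f := fun n : ℕ => ((n : ℝ) ^ p)⁻¹) 1).2
      (Real.summable_nat_rpow_inv.2 hp)

theorem separableSpace_of_forall_hasSum {E : Type*} [NormedAddCommGroup E] [NormedSpace ℝ E]
    (e : ℕ → E) (h : ∀ x, ∃ a : ℕ → ℝ, HasSum (fun v => a v • e v) x) : SeparableSpace E := by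
  refine isSeparable_univ_iff.1 <|
    ((Set.countable_range e).isSeparable.span (R := ℝ)).closure.mono fun x _ => ?_
  obtain ⟨a, ha⟩ := h x
  exact mem_closure_of_tendsto ha <| Filter.Eventually.of_forall fun s =>
    Submodule.sum_mem _ fun v _ =>
      Submodule.smul_mem _ _ (Submodule.subset_span (Set.mem_range_self v))

section InnerProductSpace

variable {E : Type*} [NormedAddCommGroup E] [InnerProductSpace ℝ E]

theorem hasSum_inner_of_hasSum {a : ℕ → ℝ} {e : ℕ → E} {x : E}
    (hx : HasSum (fun v => a v • e v) x) (y : E) :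
    HasSum (fun v => a v * ⟪y, e v⟫) ⟪y, x⟫ := by
  simpa only [innerSL_apply_apply, real_inner_smul_right] using hx.mapL (innerSL ℝ y)

theorem inner_eq_mul_inner_self_of_hasSum {a : ℕ → ℝ} {e : ℕ → E} {x : E}
    (horth : Pairwise fun u v => ⟪e u, e v⟫ = 0) (hx : HasSum (fun v => a v • e v) x) (v : ℕ) :
    ⟪e v, x⟫ = a v * ⟪e v, e v⟫ :=
  (hasSum_inner_of_hasSum hx (e v)).unique <|
    hasSum_single v fun u hu => by rw [horth hu.symm, mul_zero]

variable {Ω : Type*} [MeasurableSpace Ω] {P : Measure Ω} {Y : Ω → E}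

theorem integrable_inner_smul_of_norm_le [MeasurableSpace E] [BorelSpace E]
    [SecondCountableTopology E] [IsFiniteMeasure P] (hY : Measurable Y) {M : ℝ}
    (hM : ∀ ω, ‖Y ω‖ ≤ M) (g : E) : Integrable (fun ω => ⟪Y ω, g⟫ • Y ω) P := by
  refine Integrable.of_bound ((hY.inner measurable_const).smul hY).aestronglyMeasurable
    (M * ‖g‖ * M) (ae_of_all _ fun ω => ?_)
  have hM₀ : 0 ≤ M := (norm_nonneg _).trans (hM ω)
  calc ‖⟪Y ω, g⟫ • Y ω‖ = |⟪Y ω, g⟫| * ‖Y ω‖ := by rw [norm_smul, Real.norm_eq_abs]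
    _ ≤ ‖Y ω‖ * ‖g‖ * ‖Y ω‖ := by gcongr; exact abs_real_inner_le_norm _ _
    _ ≤ M * ‖g‖ * M := by gcongr <;> exact hM ω

theorem inner_integral_inner_smul [CompleteSpace E] {g : E}
    (hint : Integrable (fun ω => ⟪Y ω, g⟫ • Y ω) P) (f : E) :
    ⟪f, ∫ ω, ⟪Y ω, g⟫ • Y ω ∂P⟫ = ∫ ω, ⟪Y ω, f⟫ * ⟪Y ω, g⟫ ∂P := by
  rw [← integral_inner hint]
  congr with ω
  rw [real_inner_smul_right, real_inner_comm f, mul_comm]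

end InnerProductSpace

namespace RKHSContext

variable {lam : ℝ} {H : Type*} [NormedAddCommGroup H] [InnerProductSpace ℝ H]
  (ctx : RKHSContext lam H)

theorem inner_W_right (f g : H) : ⟪f, ctx.W g⟫ = lam * ctx.J f g := by
  rw [real_inner_comm, ctx.W_spec, ctx.J_symm]

theorem inner_hvec (u v : ℕ) :
    ⟪ctx.hvec u, ctx.hvec v⟫ = if u = v then 1 + lam * ctx.γ u else 0 := by
  rw [ctx.inner_eq, ctx.V_orth, ctx.J_orth]
  split_ifs <;> ring

theorem separableSpace (ctx : RKHSContext lam H) : SeparableSpace H :=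
  separableSpace_of_forall_hasSum ctx.hvec fun g => ⟨_, ctx.expansion g⟩

theorem inner_hvec_eq_V_mul (f : H) (v : ℕ) :
    ⟪ctx.hvec v, f⟫ = ctx.V f (ctx.hvec v) * (1 + lam * ctx.γ v) := by
  have horth : Pairwise fun u v => ⟪ctx.hvec u, ctx.hvec v⟫ = 0 := fun u v huv =>
    (ctx.inner_hvec u v).trans (if_neg huv)
  rw [inner_eq_mul_inner_self_of_hasSum horth (ctx.expansion f) v, ctx.inner_hvec, if_pos rfl]

theorem hasSum_norm_K_sq (hlam : 0 ≤ lam) {t : ℝ} (ht : t ∈ Set.Icc (0 : ℝ) 1) :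
    HasSum (fun v => ctx.ev (ctx.hvec v) t ^ 2 / (1 + lam * ctx.γ v)) (‖ctx.K t‖ ^ 2) := by
  have hcoeff : ∀ v, ctx.V (ctx.K t) (ctx.hvec v) = ctx.ev (ctx.hvec v) t / (1 + lam * ctx.γ v) :=
    fun v => by
      have hpos : 0 < 1 + lam * ctx.γ v := by have := ctx.γ_pos v; positivity
      rw [eq_div_iff hpos.ne', ← inner_hvec_eq_V_mul, real_inner_comm, ctx.reproducing t ht]
  have hsum := hasSum_inner_of_hasSum (ctx.expansion (ctx.K t)) (ctx.K t)
  rw [real_inner_self_eq_norm_sq] at hsum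
  convert hsum using 2 with v
  rw [hcoeff, ctx.reproducing t ht]
  ring

theorem norm_K_sq_le {m c₀ : ℝ} (hm : 1 / 2 < m) (hlam : 0 < lam) (hc₀ : 0 < c₀)
    (hγ : ∀ v : ℕ, c₀ * ((v : ℝ) + 1) ^ (2 * m) ≤ ctx.γ v) {t : ℝ} (ht : t ∈ Set.Icc (0 : ℝ) 1) :
    ‖ctx.K t‖ ^ 2 ≤ ∑' v : ℕ, ctx.Ch ^ 2 / (lam * (c₀ * ((v : ℝ) + 1) ^ (2 * m))) := by
  have hsummable : Summable fun v : ℕ => ctx.Ch ^ 2 / (lam * (c₀ * ((v : ℝ) + 1) ^ (2 * m))) := by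
    refine ((summable_nat_add_one_rpow_inv (p := 2 * m) (by linarith)).mul_left
      (ctx.Ch ^ 2 / (lam * c₀))).congr fun v => ?_
    simp only [← mul_assoc, div_eq_mul_inv, mul_inv]
  have hK := ctx.hasSum_norm_K_sq hlam.le ht
  rw [← hK.tsum_eq]
  refine hK.summable.tsum_le_tsum (fun v => ?_) hsummable
  have hev_sq : ctx.ev (ctx.hvec v) t ^ 2 ≤ ctx.Ch ^ 2 :=
    (sq_abs _).symm.trans_le (pow_le_pow_left₀ (abs_nonneg _) (ctx.hvec_bound v t ht) 2)
  exact div_le_div₀ (sq_nonneg _) hev_sq (by positivity)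
    ((mul_le_mul_of_nonneg_left (hγ v) hlam.le).trans (le_add_of_nonneg_left zero_le_one))

end RKHSContext

/-- For every `g ∈ ℋ`, the `ℋ`-valued Bochner integral `𝔼[g(T) K_T]`
exists and `𝔼[g(T) K_T] + W_λ g = g`; i.e. `g ↦ 𝔼[g(T) K_T] + W_λ g` is the identity. -/
theorem expectation_eval_smul_kernel_add_W_eq_id
    (m lam : ℝ) (hm : 1/2 < m) (hlam : 0 < lam)
    {H : Type*} [NormedAddCommGroup H] [InnerProductSpace ℝ H] [CompleteSpace H]
    [MeasurableSpace H] [BorelSpace H]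
    (ctx : RKHSContext lam H)
    (c₀ : ℝ) (hc₀ : 0 < c₀)
    (hγ : ∀ v : ℕ, c₀ * ((v : ℝ) + 1) ^ (2 * m) ≤ ctx.γ v)
    {Ω : Type*} [MeasurableSpace Ω] (P : Measure Ω) [IsProbabilityMeasure P]
    (T : Ω → ℝ) (hT : Measurable T) (hTr : ∀ ω, T ω ∈ Set.Icc (0:ℝ) 1)
    (hV : ∀ f g : H, ctx.V f g = ∫ ω, ctx.ev f (T ω) * ctx.ev g (T ω) ∂P)
    (hK : Measurable ctx.K) :
    ∀ g : H,
      Integrable (fun ω => ctx.ev g (T ω) • ctx.K (T ω)) P ∧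
      (∫ ω, ctx.ev g (T ω) • ctx.K (T ω) ∂P) + ctx.W g = g := by
  intro g
  have := ctx.separableSpace
  have hev : ∀ f ω, ctx.ev f (T ω) = ⟪ctx.K (T ω), f⟫ := fun f ω =>
    (ctx.reproducing _ (hTr ω) f).symm
  have hint : Integrable (fun ω => ⟪ctx.K (T ω), g⟫ • ctx.K (T ω)) P :=
    integrable_inner_smul_of_norm_le (hK.comp hT)
      (fun ω => Real.le_sqrt_of_sq_le (ctx.norm_K_sq_le hm hlam hc₀ hγ (hTr ω))) g
  simp only [hev]
  refine ⟨hint, ext_inner_left ℝ fun f => ?_⟩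
  rw [inner_add_right, inner_integral_inner_smul hint, ctx.inner_W_right, ctx.inner_eq, hV]
  simp only [hev]
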